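/- arXiv:0912.3159 — 2 statements merged into one kernel-verified Lean document; each statement's English description precedes it below -/
import Mathlib

section
/- Let A = S(V)#_f G, let ς̂ : V → V be a k-linear map and let χ_ς : G → k^× be a map. The k-linear map ς : A → A defined by ς(v_1⋯v_m w_g) := ς̂(v_1)⋯ς̂(v_m)χ_ς(g)w_g is a k-algebra automorphism of A if and only if ς̂ is a bijective k[G]-linear map and χ_ς is a group homomorphism. -/
open TensorProduct

noncomputable section
namespace Paper

variable {k : Type*} [Field k]

section Combinators

variable {M N P Q M' N' P' M'' : Type*}
  [AddCommMonoid M] [AddCommMonoid N] [AddCommMonoid P] [AddCommMonoid Q]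
  [AddCommMonoid M'] [AddCommMonoid N'] [AddCommMonoid P'] [AddCommMonoid M'']
  [Module k M] [Module k N] [Module k P] [Module k Q]
  [Module k M'] [Module k N'] [Module k P'] [Module k M'']

/-- `(s ⊗ id) ∘ (id ⊗ s)` : braid a pair of factors past `P`. -/
def braidPast (f : N ⊗[k] P →ₗ[k] P ⊗[k] N') (g : M ⊗[k] P →ₗ[k] P ⊗[k] M') :
    (M ⊗[k] N) ⊗[k] P →ₗ[k] P ⊗[k] (M' ⊗[k] N') :=
  (TensorProduct.assoc k P M' N').toLinearMap
    ∘ₗ g.rTensor N'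
    ∘ₗ (TensorProduct.assoc k M P N').symm.toLinearMap
    ∘ₗ f.lTensor M
    ∘ₗ (TensorProduct.assoc k M N P).toLinearMap

def braidUnder (f : M ⊗[k] N →ₗ[k] N' ⊗[k] M') (g : M' ⊗[k] P →ₗ[k] P' ⊗[k] M'') :
    M ⊗[k] (N ⊗[k] P) →ₗ[k] (N' ⊗[k] P') ⊗[k] M'' :=
  (TensorProduct.assoc k N' P' M'').symm.toLinearMap
    ∘ₗ g.lTensor N'
    ∘ₗ (TensorProduct.assoc k N' M' P).toLinearMap
    ∘ₗ f.rTensor P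
    ∘ₗ (TensorProduct.assoc k M N P).symm.toLinearMap

def midMap (f : N ⊗[k] P →ₗ[k] P' ⊗[k] N') :
    (M ⊗[k] N) ⊗[k] (P ⊗[k] Q) →ₗ[k] (M ⊗[k] P') ⊗[k] (N' ⊗[k] Q) :=
  (TensorProduct.assoc k M P' (N' ⊗[k] Q)).symm.toLinearMap
    ∘ₗ ((TensorProduct.assoc k P' N' Q).toLinearMap.lTensor M)
    ∘ₗ ((f.rTensor Q).lTensor M)
    ∘ₗ ((TensorProduct.assoc k N P Q).symm.toLinearMap.lTensor M)
    ∘ₗ (TensorProduct.assoc k M N (P ⊗[k] Q)).toLinearMap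

end Combinators

section Hq

variable (k)
variable (H : Type*) [Ring H]

/-- Axiomatisation of the Hopf algebra `H_q`. -/
structure HqData [HopfAlgebra k H] (q : k) where
  D₁ : H
  D₂ : H
  σ : Hˣ
  D_comm : D₁ * D₂ = D₂ * D₁
  σD₁ : q • ((σ : H) * D₁) = D₁ * (σ : H)
  σD₂ : q • ((σ : H) * D₂) = D₂ * (σ : H)
  comul_D₁ : Coalgebra.comul (R := k) D₁ = D₁ ⊗ₜ[k] (σ : H) + 1 ⊗ₜ[k] D₁
  comul_D₂ : Coalgebra.comul (R := k) D₂ = D₂ ⊗ₜ[k] (1 : H) + (σ : H) ⊗ₜ[k] D₂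
  comul_σ : Coalgebra.comul (R := k) ((σ : H)) = (σ : H) ⊗ₜ[k] (σ : H)
  counit_D₁ : Coalgebra.counit (R := k) D₁ = 0
  counit_D₂ : Coalgebra.counit (R := k) D₂ = 0
  counit_σ : Coalgebra.counit (R := k) ((σ : H)) = 1
  basis_generic : (∀ l : ℕ, 2 ≤ l → ¬ IsPrimitiveRoot q l) →
      ∃ b : Module.Basis (ℤ × ℕ × ℕ) k H,
        ∀ i j m, b (i, j, m) = ((σ ^ i : Hˣ) : H) * D₁ ^ j * D₂ ^ m
  basis_root : ∀ l : ℕ, 2 ≤ l → IsPrimitiveRoot q l →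
      D₁ ^ l = 0 ∧ D₂ ^ l = 0 ∧
      ∃ b : Module.Basis (ℤ × Fin l × Fin l) k H,
        ∀ i j m, b (i, j, m) = ((σ ^ i : Hˣ) : H) * D₁ ^ (j : ℕ) * D₂ ^ (m : ℕ)

variable (A : Type*) [Ring A] [Algebra k A]

/-- A left transposition of a (standard, flip-braided) bialgebra `H` on an algebra `A`. -/
structure IsTransposition [HopfAlgebra k H] (s : H ⊗[k] A ≃ₗ[k] A ⊗[k] H) : Prop where
  unit_H : ∀ a : A, s ((1 : H) ⊗ₜ[k] a) = a ⊗ₜ[k] (1 : H)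
  mul_H : s.toLinearMap ∘ₗ (LinearMap.mul' k H).rTensor A
      = (LinearMap.mul' k H).lTensor A ∘ₗ braidPast s.toLinearMap s.toLinearMap
  counit_compat : (TensorProduct.rid k A).toLinearMap
        ∘ₗ (Coalgebra.counit (R := k) (A := H)).lTensor A ∘ₗ s.toLinearMap
      = (TensorProduct.lid k A).toLinearMap ∘ₗ (Coalgebra.counit (R := k) (A := H)).rTensor A
  comul_compat : (Coalgebra.comul (R := k) (A := H)).lTensor A ∘ₗ s.toLinearMap
      = braidPast s.toLinearMap s.toLinearMap ∘ₗ (Coalgebra.comul (R := k) (A := H)).rTensor A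
  unit_A : ∀ h : H, s (h ⊗ₜ[k] (1 : A)) = (1 : A) ⊗ₜ[k] h
  mul_A : s.toLinearMap ∘ₗ (LinearMap.mul' k A).lTensor H
      = (LinearMap.mul' k A).rTensor H ∘ₗ braidUnder s.toLinearMap s.toLinearMap
  braid_compat : braidPast s.toLinearMap s.toLinearMap
        ∘ₗ (TensorProduct.comm k H H).toLinearMap.rTensor A
      = (TensorProduct.comm k H H).toLinearMap.lTensor A
        ∘ₗ braidPast s.toLinearMap s.toLinearMap

/-- The action `H ⊗ A → A` attached to an algebra morphism `H →ₐ Module.End k A`. -/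
def actMap [HopfAlgebra k H] (ρ : H →ₐ[k] Module.End k A) : H ⊗[k] A →ₗ[k] A :=
  TensorProduct.lift ρ.toLinearMap

/-- `(A, s)` is a left `H`-braided module algebra via the action `ρ`
(braid of `H` = flip). -/
structure IsModuleAlgebra [HopfAlgebra k H] (s : H ⊗[k] A ≃ₗ[k] A ⊗[k] H)
    (ρ : H →ₐ[k] Module.End k A) : Prop where
  compat_s : s.toLinearMap ∘ₗ (actMap k H A ρ).lTensor H
        ∘ₗ (TensorProduct.assoc k H H A).toLinearMap
      = (actMap k H A ρ).rTensor H
        ∘ₗ (TensorProduct.assoc k H A H).symm.toLinearMap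
        ∘ₗ s.toLinearMap.lTensor H
        ∘ₗ (TensorProduct.assoc k H H A).toLinearMap
        ∘ₗ (TensorProduct.comm k H H).toLinearMap.rTensor A
  mul_act : ∀ (h : H) (a b : A), ρ h (a * b)
      = (LinearMap.mul' k A
          ∘ₗ TensorProduct.map (actMap k H A ρ) (actMap k H A ρ)
          ∘ₗ midMap s.toLinearMap)
        ((Coalgebra.comul (R := k) h) ⊗ₜ[k] (a ⊗ₜ[k] b))
  one_act : ∀ h : H, ρ h (1 : A) = Coalgebra.counit (R := k) h • (1 : A)

/-- `s` is a *good* transposition. -/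
def GoodTransposition {q : k} [HopfAlgebra k H] (hq : HqData k H q)
    (s : H ⊗[k] A ≃ₗ[k] A ⊗[k] H) : Prop :=
  ∀ a : A, braidPast s.toLinearMap s.toLinearMap ((hq.D₁ ⊗ₜ[k] hq.D₂) ⊗ₜ[k] a)
    = a ⊗ₜ[k] (hq.D₁ ⊗ₜ[k] hq.D₂)

end Hq


section Crossed

variable {G : Type*} [Group G] {V : Type*} [AddCommGroup V] [Module k V]

variable (G) in
/-- `f` is a normal 2-cocycle on `G` with values in `kˣ`. -/
structure IsCocycle (f : G → G → kˣ) : Prop where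
  one_left : ∀ g, f 1 g = 1
  one_right : ∀ g, f g 1 = 1
  cocycle : ∀ g h l, f g h * f (g * h) l = f g (h * l) * f h l

variable (A : Type*) [Ring A] [Algebra k A]

/-- Axiomatisation of the crossed product `S(V) #_f G`:  `A` is generated by a copy of `V`
(with commuting elements, generating a copy of the symmetric algebra) and elements `w g`,
and is free as a module over the symmetric part with basis `{w g}`. -/
structure CrossedProduct (ρV : Representation k G V) (f : G → G → kˣ) where
  ι : V →ₗ[k] A
  w : G → A
  w_one : w 1 = 1
  ι_comm : ∀ v v', ι v * ι v' = ι v' * ι v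
  w_ι : ∀ g v, w g * ι v = ι (ρV g v) * w g
  w_mul : ∀ g h, w g * w h = (f g h : k) • w (g * h)
  isBasis : ∀ {n : ℕ} (bV : Module.Basis (Fin n) k V),
      ∃ bA : Module.Basis ((Fin n → ℕ) × G) k A,
        ∀ d g, bA (d, g) = (List.ofFn fun i => ι (bV i) ^ d i).prod * w g

namespace CrossedProduct

variable {A} {ρV : Representation k G V} {f : G → G → kˣ}

/-- The product in `A` of the images of a list of elements of `V`. -/
def mon (cp : CrossedProduct A ρV f) (l : List V) : A := (l.map cp.ι).prod

/-- `v₁ ⋯ v_{j-1}` : the image of the prefix of a monomial. -/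
def pre (cp : CrossedProduct A ρV f) {m : ℕ} (v : Fin m → V) (j : Fin m) : A :=
  cp.mon ((List.ofFn v).take j)

/-- `v_{j+1} ⋯ v_m` : the image of the suffix of a monomial. -/
def suf (cp : CrossedProduct A ρV f) {m : ℕ} (v : Fin m → V) (j : Fin m) : A :=
  cp.mon ((List.ofFn v).drop (j + 1))

/-- The subalgebra `S(V)` of the crossed product. -/
def SV (cp : CrossedProduct A ρV f) : Subalgebra k A :=
  Algebra.adjoin k (Set.range cp.ι)

/-- The subalgebra `S(W)` of the crossed product, for a subspace `W ≤ V`. -/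
def SW (cp : CrossedProduct A ρV f) (W : Submodule k V) : Subalgebra k A :=
  Algebra.adjoin k (cp.ι '' (W : Set V))

end CrossedProduct

/-- A linear endomorphism of `V` is `k[G]`-linear if it commutes with the `G`-action. -/
def GLinear (ρV : Representation k G V) (φ : V →ₗ[k] V) : Prop :=
  ∀ g v, φ (ρV g v) = ρV g (φ v)

variable (G) in
/-- `χ : G → kˣ` is a group homomorphism. -/
def IsCharacter (χ : G → kˣ) : Prop := ∀ g h, χ (g * h) = χ g * χ h

section Defs

variable {H : Type*} [Ring H] [HopfAlgebra k H] {q : k}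
variable {ρV : Representation k G V} {f : G → G → kˣ}

/-- `s` is the (good) transposition of `H_q` on `A` associated with the automorphism `α`. -/
def AssocTransposition (hq : HqData k H q)
    (s : H ⊗[k] A ≃ₗ[k] A ⊗[k] H) (α : A ≃ₐ[k] A) : Prop :=
  IsTransposition k H A s ∧ GoodTransposition k H A hq s
    ∧ (∀ a : A, s (hq.D₁ ⊗ₜ[k] a) = α a ⊗ₜ[k] hq.D₁)
    ∧ (∀ a : A, s (hq.D₂ ⊗ₜ[k] a) = α.symm a ⊗ₜ[k] hq.D₂)

variable {A}

/-- `ς` is the endomorphism of `A` determined by `ς̂` and `χ_ς`. -/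
def SigmaDef (cp : CrossedProduct A ρV f) (ςhat : V →ₗ[k] V) (χς : G → kˣ)
    (ς : Module.End k A) : Prop :=
  ∀ (m : ℕ) (v : Fin m → V) (g : G),
    ς (cp.mon (List.ofFn v) * cp.w g)
      = (χς g : k) • (cp.mon (List.ofFn fun i => ςhat (v i)) * cp.w g)

/-- `δ₁` is determined by `δ̂₁`, `δ̄₁` via the `(α, ς)`-twisted Leibniz formula. -/
def Delta1Def (cp : CrossedProduct A ρV f) (α : A ≃ₐ[k] A) (ς : Module.End k A)
    (δhat : V →ₗ[k] A) (δbar : G → A) (δ : Module.End k A) : Prop :=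
  ∀ (m : ℕ) (v : Fin m → V) (g : G),
    δ (cp.mon (List.ofFn v) * cp.w g)
      = (∑ j : Fin m, α (cp.pre v j) * δhat (v j) * ς (cp.suf v j * cp.w g))
        + α (cp.mon (List.ofFn v)) * δbar g

/-- `δ₂` is determined by `δ̂₂`, `δ̄₂` via the `(ς ∘ α⁻¹, id)`-twisted Leibniz formula. -/
def Delta2Def (cp : CrossedProduct A ρV f) (α : A ≃ₐ[k] A) (ς : Module.End k A)
    (δhat : V →ₗ[k] A) (δbar : G → A) (δ : Module.End k A) : Prop :=
  ∀ (m : ℕ) (v : Fin m → V) (g : G),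
    δ (cp.mon (List.ofFn v) * cp.w g)
      = (∑ j : Fin m, ς (α.symm (cp.pre v j)) * δhat (v j) * (cp.suf v j * cp.w g))
        + ς (α.symm (cp.mon (List.ofFn v))) * δbar g

/-- There is an `H_q`-braided module algebra structure on `(A, s)` with the
prescribed values of the action on `V` and on the `w_g`. -/
def HasHqModuleStructure (hq : HqData k H q) (cp : CrossedProduct A ρV f)
    (s : H ⊗[k] A ≃ₗ[k] A ⊗[k] H) (ςhat : V →ₗ[k] V) (χς : G → kˣ)
    (δhat1 δhat2 : V →ₗ[k] A) (δbar1 δbar2 : G → A) : Prop :=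
  ∃ ρ : H →ₐ[k] Module.End k A, IsModuleAlgebra k H A s ρ
    ∧ (∀ v : V, ρ (hq.σ : H) (cp.ι v) = cp.ι (ςhat v))
    ∧ (∀ g : G, ρ (hq.σ : H) (cp.w g) = (χς g : k) • cp.w g)
    ∧ (∀ v : V, ρ hq.D₁ (cp.ι v) = δhat1 v)
    ∧ (∀ g : G, ρ hq.D₁ (cp.w g) = δbar1 g)
    ∧ (∀ v : V, ρ hq.D₂ (cp.ι v) = δhat2 v)
    ∧ (∀ g : G, ρ hq.D₂ (cp.w g) = δbar2 g)

end Defs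

end Crossed

end Paper

/-!
On the basis `v^d w_g` of `A` built from a basis of `V`, `ς` acts by `v^d w_g ↦ χ_ς(g) ς̂(v)^d w_g`.
If `ς̂` is bijective, `ς̂(v)` is again a basis of `V`, so `ς` maps a basis to a rescaled basis
and is bijective. Using `w_g v = (ᵍv) w_g` and `w_g w_h = f(g,h) w_{gh}`, multiplicativity of `ς`
on two basis elements amounts exactly to `ς̂ ∘ g = g ∘ ς̂` and `χ_ς(gh) = χ_ς(g) χ_ς(h)`.
Conversely, applying a multiplicative `ς` to `w_g w_h` and to `w_g v`, and cancelling the nonzero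
`w_{gh}` and the invertible `w_g`, recovers these identities; injectivity of `ς` on `V ⊆ A` gives
injectivity, hence bijectivity, of `ς̂`.
-/

namespace Paper

section MonomialList

variable {α : Type*}

def monomialList {n : ℕ} (u : Fin n → α) (d : Fin n → ℕ) : List α :=
  (List.ofFn fun i => List.replicate (d i) (u i)).flatten

@[simp]
theorem monomialList_zero {n : ℕ} (u : Fin n → α) : monomialList u 0 = [] := by
  simp [monomialList]

theorem monomialList_single {n : ℕ} (u : Fin n → α) (i : Fin n) :
    monomialList u (Pi.single i 1) = [u i] := by
  induction n with
  | zero => exact i.elim0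
  | succ n ih =>
    simp only [monomialList, List.ofFn_succ, List.flatten_cons] at ih ⊢
    cases i using Fin.cases with
    | zero => simp [Fin.succ_ne_zero]
    | succ i =>
      simp only [Pi.single_apply, Fin.succ_inj, (Fin.succ_ne_zero i).symm, if_false,
        List.replicate_zero, List.nil_append]
      simpa only [Pi.single_apply, Function.comp_apply] using ih (u ∘ Fin.succ) i

theorem map_monomialList {β : Type*} (φ : α → β) {n : ℕ} (u : Fin n → α) (d : Fin n → ℕ) :
    (monomialList u d).map φ = monomialList (φ ∘ u) d := by
  simp [monomialList, List.map_flatten, List.map_ofFn, Function.comp_def]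

end MonomialList

namespace CrossedProduct

variable {k : Type*} [Field k] {G : Type*} [Group G] {V : Type*} [AddCommGroup V] [Module k V]
  {A : Type*} [Ring A] [Algebra k A] {ρV : Representation k G V} {f : G → G → kˣ}
  (cp : CrossedProduct A ρV f)

@[simp]
theorem mon_nil : cp.mon [] = 1 := rfl

@[simp]
theorem mon_singleton (v : V) : cp.mon [v] = cp.ι v := by
  simp [mon]

theorem mon_append (l l' : List V) : cp.mon (l ++ l') = cp.mon l * cp.mon l' := by
  simp [mon]

theorem mon_monomialList {n : ℕ} (u : Fin n → V) (d : Fin n → ℕ) :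
    cp.mon (monomialList u d) = (List.ofFn fun i => cp.ι (u i) ^ d i).prod := by
  simp [mon, monomialList, List.map_flatten, List.map_ofFn, List.prod_flatten,
    Function.comp_def]

theorem exists_basis_mon_mul_w {n : ℕ} (bV : Module.Basis (Fin n) k V) :
    ∃ bA : Module.Basis ((Fin n → ℕ) × G) k A,
      ∀ d g, bA (d, g) = cp.mon (monomialList bV d) * cp.w g := by
  obtain ⟨bA, hbA⟩ := cp.isBasis bV
  exact ⟨bA, fun d g => by rw [hbA, mon_monomialList]⟩

theorem w_mul_mon (g : G) (l : List V) :
    cp.w g * cp.mon l = cp.mon (l.map (ρV g)) * cp.w g := by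
  induction l with
  | nil => simp
  | cons v l ih =>
    simp only [mon, List.map_cons, List.prod_cons] at ih ⊢
    rw [← mul_assoc, cp.w_ι, mul_assoc, ih, mul_assoc]

theorem mon_mul_w_mul_mon_mul_w (l l' : List V) (g h : G) :
    cp.mon l * cp.w g * (cp.mon l' * cp.w h)
      = (f g h : k) • (cp.mon (l ++ l'.map (ρV g)) * cp.w (g * h)) := by
  rw [mul_assoc, ← mul_assoc (cp.w g), w_mul_mon, mul_assoc, cp.w_mul, mon_append,
    mul_smul_comm, mul_smul_comm, mul_assoc]

theorem mul_w_injective (g : G) : Function.Injective fun x : A => x * cp.w g := by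
  intro x y hxy
  have h := congrArg (· * cp.w g⁻¹) hxy
  simp only [mul_assoc, cp.w_mul, mul_inv_cancel, cp.w_one, mul_smul_comm, mul_one] at h
  exact smul_right_injective A (f g g⁻¹).ne_zero h

variable [FiniteDimensional k V]

theorem w_ne_zero (g : G) : cp.w g ≠ 0 := by
  obtain ⟨bA, hbA⟩ := cp.exists_basis_mon_mul_w (Module.finBasis k V)
  simpa [hbA] using bA.ne_zero (0, g)

theorem ι_injective : Function.Injective cp.ι := by
  let bV := Module.finBasis k V
  obtain ⟨bA, hbA⟩ := cp.exists_basis_mon_mul_w bV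
  have hιbV : cp.ι ∘ bV = bA ∘ fun i => (Pi.single i 1, 1) := by
    ext i
    simp [hbA, monomialList_single, cp.w_one]
  refine LinearMap.injective_of_linearIndependent bV.span_eq ?_
  rw [hιbV]
  refine bA.linearIndependent.comp _ fun i j hij => ?_
  simpa [Pi.single_apply, eq_comm] using congrFun (Prod.ext_iff.mp hij).1 i

end CrossedProduct

variable {k : Type*} [Field k] {G : Type*} [Group G] {V : Type*} [AddCommGroup V] [Module k V]
  {A : Type*} [Ring A] [Algebra k A] {ρV : Representation k G V} {f : G → G → kˣ}
  {cp : CrossedProduct A ρV f}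

theorem IsCharacter.map_one {χ : G → kˣ} (hχ : IsCharacter G χ) : χ 1 = 1 := by
  simpa using hχ 1 1

namespace SigmaDef

variable {ςhat : V →ₗ[k] V} {χς : G → kˣ} {ς : Module.End k A}
  (hς : SigmaDef cp ςhat χς ς)
include hς

theorem apply_mon_mul_w (l : List V) (g : G) :
    ς (cp.mon l * cp.w g) = (χς g : k) • (cp.mon (l.map ςhat) * cp.w g) := by
  simpa [List.map_ofFn, Function.comp_def] using hς l.length l.get g

theorem apply_w (g : G) : ς (cp.w g) = (χς g : k) • cp.w g := by
  simpa using hς.apply_mon_mul_w [] g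

theorem apply_ι_of_isCharacter (hχ : IsCharacter G χς) (v : V) :
    ς (cp.ι v) = cp.ι (ςhat v) := by
  simpa [cp.w_one, hχ.map_one] using hς.apply_mon_mul_w [v] 1

theorem map_one (hχ : IsCharacter G χς) : ς 1 = 1 := by
  simpa [cp.w_one, hχ.map_one] using hς.apply_w 1

theorem map_mon_mul_w_mul (hG : GLinear ρV ςhat) (hχ : IsCharacter G χς)
    (l l' : List V) (g h : G) :
    ς (cp.mon l * cp.w g * (cp.mon l' * cp.w h))
      = ς (cp.mon l * cp.w g) * ς (cp.mon l' * cp.w h) := by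
  have hcomm : (l'.map (ρV g)).map ςhat = (l'.map ςhat).map (ρV g) := by
    simp only [List.map_map]
    exact List.map_congr_left fun v _ => hG g v
  rw [cp.mon_mul_w_mul_mon_mul_w, map_smul, hς.apply_mon_mul_w, hς.apply_mon_mul_w,
    hς.apply_mon_mul_w, smul_mul_smul_comm, cp.mon_mul_w_mul_mon_mul_w, List.map_append, hcomm,
    smul_smul, smul_smul, hχ, Units.val_mul, mul_comm]

variable [FiniteDimensional k V]

theorem map_mul (hG : GLinear ρV ςhat) (hχ : IsCharacter G χς)
    (a b : A) : ς (a * b) = ς a * ς b := by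
  obtain ⟨bA, hbA⟩ := cp.exists_basis_mon_mul_w (Module.finBasis k V)
  have hbilin : (LinearMap.mul k A).compr₂ ς = (LinearMap.mul k A).compl₁₂ ς ς :=
    bA.ext fun ⟨_, _⟩ => bA.ext fun ⟨_, _⟩ => by
      simpa [hbA] using hς.map_mon_mul_w_mul hG hχ _ _ _ _
  simpa using LinearMap.congr_fun₂ hbilin a b

theorem bijective (hbij : Function.Bijective ςhat) :
    Function.Bijective ς := by
  let bV := Module.finBasis k V
  obtain ⟨bA, hbA⟩ := cp.exists_basis_mon_mul_w bV
  obtain ⟨bA', hbA'⟩ := cp.exists_basis_mon_mul_w (bV.map (LinearEquiv.ofBijective ςhat hbij))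
  have hς_eq : ς = (bA.equiv (bA'.unitsSMul fun p => χς p.2) (Equiv.refl _)).toLinearMap :=
    bA.ext fun ⟨d, g⟩ => by
      rw [LinearEquiv.coe_toLinearMap, Module.Basis.equiv_apply, Equiv.refl_apply,
        Module.Basis.unitsSMul_apply, Units.smul_def, hbA, hbA', hς.apply_mon_mul_w,
        map_monomialList]
      rfl
  rw [hς_eq]
  exact LinearEquiv.bijective _

variable (hmul : ∀ a b : A, ς (a * b) = ς a * ς b)
include hmul

theorem isCharacter : IsCharacter G χς := by
  intro g h
  have hw := congrArg ς (cp.w_mul g h)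
  rw [hmul, hς.apply_w, hς.apply_w, map_smul, hς.apply_w, smul_mul_smul_comm, cp.w_mul,
    smul_smul, smul_smul] at hw
  have := smul_left_injective k (cp.w_ne_zero (g * h)) hw
  ext
  simpa [mul_comm, (f g h).ne_zero] using this.symm

theorem gLinear : GLinear ρV ςhat := by
  intro g v
  have hχ := hς.isCharacter hmul
  have hwι := congrArg ς (cp.w_ι g v)
  rw [hmul, hmul, hς.apply_w, hς.apply_ι_of_isCharacter hχ, hς.apply_ι_of_isCharacter hχ,
    smul_mul_assoc, mul_smul_comm, cp.w_ι] at hwι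
  exact cp.ι_injective (cp.mul_w_injective g (smul_right_injective A (χς g).ne_zero hwι.symm))

theorem injective_of_injective (hinj : Function.Injective ς) : Function.Injective ςhat := by
  intro v v' hv
  have hχ := hς.isCharacter hmul
  apply cp.ι_injective
  apply hinj
  rw [hς.apply_ι_of_isCharacter hχ, hς.apply_ι_of_isCharacter hχ, hv]

end SigmaDef

end Paper

open Paper in
theorem statement_8_general {k : Type*} [Field k]
    {G : Type*} [Group G] {V : Type*} [AddCommGroup V] [Module k V] [FiniteDimensional k V]
    (ρV : Representation k G V) (f : G → G → kˣ)
    {A : Type*} [Ring A] [Algebra k A] (cp : CrossedProduct A ρV f)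
    (ςhat : V →ₗ[k] V) (χς : G → kˣ)
    (ς : Module.End k A) (hςdef : SigmaDef cp ςhat χς ς) :
    (Function.Bijective ς ∧ ς 1 = 1 ∧ ∀ a b : A, ς (a * b) = ς a * ς b)
    ↔ (Function.Bijective ςhat ∧ GLinear ρV ςhat ∧ IsCharacter G χς) := by
  constructor
  · rintro ⟨⟨hinj, -⟩, -, hmul⟩
    have hinjhat := hςdef.injective_of_injective hmul hinj
    exact ⟨⟨hinjhat, LinearMap.injective_iff_surjective.mp hinjhat⟩,
      hςdef.gLinear hmul, hςdef.isCharacter hmul⟩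
  · rintro ⟨hbij, hG, hχ⟩
    exact ⟨hςdef.bijective hbij, hςdef.map_one hχ, hςdef.map_mul hG hχ⟩

open Paper in
/-- The map `ς(v₁⋯v_m w_g) = ς̂(v₁)⋯ς̂(v_m) χ_ς(g) w_g` is an algebra
automorphism of `A = S(V) #_f G` iff `ς̂` is bijective `k[G]`-linear and `χ_ς` is a character. -/
theorem statement_8 {k : Type*} [Field k]
    {G : Type*} [Group G] {V : Type*} [AddCommGroup V] [Module k V] [FiniteDimensional k V]
    (ρV : Representation k G V) (f : G → G → kˣ) (hf : IsCocycle G f)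
    {A : Type*} [Ring A] [Algebra k A] (cp : CrossedProduct A ρV f)
    (ςhat : V →ₗ[k] V) (χς : G → kˣ)
    (ς : Module.End k A) (hςdef : SigmaDef cp ςhat χς ς) :
    (Function.Bijective ς ∧ ς 1 = 1 ∧ ∀ a b : A, ς (a * b) = ς a * ς b)
    ↔ (Function.Bijective ςhat ∧ GLinear ρV ςhat ∧ IsCharacter G χς) :=
  statement_8_general ρV f cp ςhat χς ς hςdef
end
end

section
/- In the first-case setting (with δ̄_1 = δ̄_2 = 0): (1) the identity δ̂_1(v)ς̂(w) + α̂(v)δ̂_1(w) = δ̂_1(w)ς̂(v) + α̂(w)δ̂_1(v) holds for all v,w ∈ V if and only if ^{g_1}ς̂(v) = α̂(v) for all v ∈ ker δ̂_1; and (2) the identity δ̂_2(v)w + ς̂(α̂^{-1}(v))δ̂_2(w) = δ̂_2(w)v + ς̂(α̂^{-1}(w))δ̂_2(v) holds for all v,w ∈ V if and only if ^{g_2}v = ς̂(α̂^{-1}(v)) for all v ∈ ker δ̂_2. -/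
/-!
Both equivalences are one statement about a map `δ : V → A` with `δ x = D` and
`V = ker δ + k x`: the antisymmetric defect `δ v β w + γ v δ w - (δ w β v + γ w δ v)` is
determined by its values at `(x, z)` with `z ∈ ker δ`, which are `D β z - γ z D`.
For `D = P w_g` with `P ∈ S(V)`, moving `w_g` past `V` gives
`P w_g ι a - ι b P w_g = ι (ᵍa - b) P w_g`, and this vanishes only when `ᵍa = b`, because `w_g`
is invertible up to a scalar and `S(V)`, being a polynomial ring on a basis of `V`, has no zero
divisors.
-/

open TensorProduct

noncomputable section
section RankOneLeibniz

variable {R V A : Type*} [CommRing R] [AddCommGroup V] [Module R V] [Ring A] [Algebra R A]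

theorem forall_symm_twisted_iff_of_ker_codim_one {δ β γ : V →ₗ[R] A} {x : V} {D : A}
    (hδx : δ x = D) (hcodim : ∀ v : V, ∃ c : R, v - c • x ∈ LinearMap.ker δ) :
    (∀ v w : V, δ v * β w + γ v * δ w = δ w * β v + γ w * δ v)
      ↔ ∀ z ∈ LinearMap.ker δ, D * β z = γ z * D := by
  constructor
  · intro hid z hz
    simpa [LinearMap.mem_ker.mp hz, hδx] using hid x z
  · intro hker v w
    have hδ : ∀ (z : V) (c : R), z - c • x ∈ LinearMap.ker δ → δ z = c • D := by
      intro z c hz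
      rw [← hδx, ← map_smul, ← sub_eq_zero, ← map_sub]
      exact hz
    -- `L z = D β z - γ z D` vanishes on `ker δ`, so it is `c • L x` when `z ≡ c x`.
    have hL : ∀ (z : V) (c : R), z - c • x ∈ LinearMap.ker δ →
        D * β z - γ z * D = c • (D * β x - γ x * D) := by
      intro z c hz
      have h := hker _ hz
      simp only [map_sub, map_smul, mul_sub, sub_mul, mul_smul_comm, smul_mul_assoc] at h
      rw [smul_sub, sub_eq_sub_iff_sub_eq_sub, h]
    obtain ⟨c, hc⟩ := hcodim v
    obtain ⟨d, hd⟩ := hcodim w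
    have hv := hL v c hc
    have hw := hL w d hd
    rw [← sub_eq_zero]
    calc δ v * β w + γ v * δ w - (δ w * β v + γ w * δ v)
        = c • (D * β w - γ w * D) - d • (D * β v - γ v * D) := by
          rw [hδ v c hc, hδ w d hd]
          simp only [smul_mul_assoc, mul_smul_comm, smul_sub]
          abel
      _ = 0 := by rw [hv, hw, smul_smul, smul_smul, mul_comm, sub_self]

end RankOneLeibniz

namespace Paper.CrossedProduct

open MvPolynomial

variable {k G V A : Type*} [Field k] [Group G] [AddCommGroup V] [Module k V] [Ring A] [Algebra k A]
  {ρV : Representation k G V} {f : G → G → kˣ} (cp : CrossedProduct A ρV f)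

theorem commute_ι_of_mem_SV {P : A} (hP : P ∈ cp.SV) (v : V) : Commute P (cp.ι v) := by
  have hle : cp.SV ≤ Subalgebra.centralizer k {cp.ι v} := by
    refine Algebra.adjoin_le ?_
    rintro _ ⟨u, rfl⟩ _ rfl
    exact cp.ι_comm v u
  exact (hle hP (cp.ι v) rfl).symm

theorem mul_w_mul_ι {P : A} (hP : P ∈ cp.SV) (g : G) (v : V) :
    P * cp.w g * cp.ι v = cp.ι (ρV g v) * (P * cp.w g) := by
  rw [mul_assoc, cp.w_ι, ← mul_assoc, (cp.commute_ι_of_mem_SV hP _).eq, mul_assoc]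

theorem mul_w_right_cancel (g : G) {a b : A} (h : a * cp.w g = b * cp.w g) : a = b := by
  have h' := congrArg (· * cp.w g⁻¹) h
  simp only [mul_assoc, cp.w_mul, mul_inv_cancel, cp.w_one, mul_smul_comm, mul_one] at h'
  exact smul_right_injective A (f g g⁻¹).ne_zero h'

instance : IsMulCommutative cp.SV :=
  Algebra.isMulCommutative_adjoin k (by rintro _ ⟨a, rfl⟩ _ ⟨b, rfl⟩; exact cp.ι_comm a b)

open scoped IsMulCommutative

def aevalBasis {n : ℕ} (bV : Module.Basis (Fin n) k V) : MvPolynomial (Fin n) k →ₐ[k] A :=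
  cp.SV.val.comp (aeval fun i => ⟨cp.ι (bV i), Algebra.subset_adjoin ⟨bV i, rfl⟩⟩)

variable {n : ℕ} (bV : Module.Basis (Fin n) k V)

theorem aevalBasis_X (i : Fin n) : cp.aevalBasis bV (X i) = cp.ι (bV i) := by
  simp [aevalBasis]

theorem aevalBasis_monomial_one (d : Fin n →₀ ℕ) :
    cp.aevalBasis bV (monomial d 1) = (List.ofFn fun i => cp.ι (bV i) ^ d i).prod := by
  rw [aevalBasis, AlgHom.comp_apply, aeval_monomial, map_one, one_mul,
    Finsupp.prod_fintype _ _ fun _ => pow_zero _, ← List.prod_ofFn, Subalgebra.coe_val,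
    SubmonoidClass.coe_list_prod, List.map_ofFn]
  rfl

theorem ι_eq_aevalBasis (v : V) : cp.ι v = cp.aevalBasis bV (∑ i, bV.repr v i • X i) := by
  conv_lhs => rw [← bV.sum_repr v]
  simp only [map_sum, map_smul, aevalBasis_X]

theorem SV_le_range_aevalBasis : cp.SV ≤ (cp.aevalBasis bV).range := by
  refine Algebra.adjoin_le ?_
  rintro _ ⟨v, rfl⟩
  exact ⟨_, (cp.ι_eq_aevalBasis bV v).symm⟩

theorem aevalBasis_injective : Function.Injective (cp.aevalBasis bV) := by
  obtain ⟨bA, hbA⟩ := cp.isBasis bV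
  refine LinearMap.injective_of_linearIndependent (f := (cp.aevalBasis bV).toLinearMap)
    (basisMonomials (Fin n) k).span_eq ?_
  have hmon : (cp.aevalBasis bV).toLinearMap ∘ basisMonomials (Fin n) k
      = bA ∘ fun d : Fin n →₀ ℕ => ((d : Fin n → ℕ), (1 : G)) := by
    funext d
    simp [coe_basisMonomials, aevalBasis_monomial_one, hbA, cp.w_one]
  rw [hmon]
  exact bA.linearIndependent.comp _ fun d e hde => DFunLike.coe_injective (congrArg Prod.fst hde)

theorem eq_zero_of_ι_mul_eq_zero [FiniteDimensional k V] {P : A} (hP : P ∈ cp.SV) (hP0 : P ≠ 0)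
    {u : V} (h : cp.ι u * P = 0) : u = 0 := by
  set bV := Module.finBasis k V
  obtain ⟨p, hp⟩ := cp.SV_le_range_aevalBasis bV hP
  replace hp : cp.aevalBasis bV p = P := hp
  have hℓ : (∑ i, bV.repr u i • X i : MvPolynomial _ k) * p = 0 := by
    apply cp.aevalBasis_injective bV
    rw [map_mul, ← cp.ι_eq_aevalBasis, hp, h, map_zero]
  have hp0 : p ≠ 0 := by rintro rfl; exact hP0 (by rw [← hp, map_zero])
  have hrepr := Fintype.linearIndependent_iff.mp (linearIndependent_X _ k)
    _ ((mul_eq_zero.mp hℓ).resolve_right hp0)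
  exact bV.repr.map_eq_zero_iff.mp (Finsupp.ext hrepr)

theorem mul_w_mul_ι_eq_iff [FiniteDimensional k V] {P : A} (hP : P ∈ cp.SV) (hP0 : P ≠ 0)
    (g : G) (a b : V) : P * cp.w g * cp.ι a = cp.ι b * (P * cp.w g) ↔ ρV g a = b := by
  rw [cp.mul_w_mul_ι hP, ← sub_eq_zero, ← sub_mul, ← map_sub, ← mul_assoc, ← sub_eq_zero (b := b)]
  refine ⟨fun h => cp.eq_zero_of_ι_mul_eq_zero hP hP0 (cp.mul_w_right_cancel g ?_), fun h => ?_⟩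
  · rw [h, zero_mul]
  · rw [h, map_zero, zero_mul, zero_mul]

theorem forall_symm_twisted_iff [FiniteDimensional k V] {β γ : V →ₗ[k] V} {δ : V →ₗ[k] A}
    {x : V} {g : G} {P : A} (hP : P ∈ cp.SV) (hδx : δ x = P * cp.w g)
    (hx : x ∉ LinearMap.ker δ) (hcodim : ∀ v : V, ∃ c : k, v - c • x ∈ LinearMap.ker δ) :
    (∀ v w : V, δ v * cp.ι (β w) + cp.ι (γ v) * δ w = δ w * cp.ι (β v) + cp.ι (γ w) * δ v)
      ↔ ∀ v ∈ LinearMap.ker δ, ρV g (β v) = γ v := by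
  have hP0 : P ≠ 0 := by
    rintro rfl
    exact hx (by rw [LinearMap.mem_ker, hδx, zero_mul])
  exact (forall_symm_twisted_iff_of_ker_codim_one (β := cp.ι ∘ₗ β) (γ := cp.ι ∘ₗ γ) hδx
    hcodim).trans (forall₂_congr fun z _ => cp.mul_w_mul_ι_eq_iff hP hP0 g _ _)

end Paper.CrossedProduct

open Paper in
theorem statement_12_general {k : Type*} [Field k]
    {G : Type*} [Group G] {V : Type*} [AddCommGroup V] [Module k V] [FiniteDimensional k V]
    (ρV : Representation k G V) (f : G → G → kˣ)
    {A : Type*} [Ring A] [Algebra k A] (cp : CrossedProduct A ρV f)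
    (αhat : V ≃ₗ[k] V)
    (ςhat : V →ₗ[k] V)
    (δhat₁ δhat₂ : V →ₗ[k] A)
    (x₁ x₂ : V) (g₁ g₂ : G) (P₁ P₂ : A)
    (hP₁ : P₁ ∈ cp.SV) (hP₂ : P₂ ∈ cp.SV)
    (hδx₁ : δhat₁ x₁ = P₁ * cp.w g₁) (hδx₂ : δhat₂ x₂ = P₂ * cp.w g₂)
    (hx₁ : x₁ ∉ LinearMap.ker δhat₁) (hx₂ : x₂ ∉ LinearMap.ker δhat₂)
    (hcodim₁ : ∀ v : V, ∃ c : k, v - c • x₁ ∈ LinearMap.ker δhat₁)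
    (hcodim₂ : ∀ v : V, ∃ c : k, v - c • x₂ ∈ LinearMap.ker δhat₂) :
    ((∀ v w : V,
        δhat₁ v * cp.ι (ςhat w) + cp.ι (αhat v) * δhat₁ w
          = δhat₁ w * cp.ι (ςhat v) + cp.ι (αhat w) * δhat₁ v)
      ↔ ∀ v ∈ LinearMap.ker δhat₁, ρV g₁ (ςhat v) = αhat v)
    ∧ ((∀ v w : V,
        δhat₂ v * cp.ι w + cp.ι (ςhat (αhat.symm v)) * δhat₂ w
          = δhat₂ w * cp.ι v + cp.ι (ςhat (αhat.symm w)) * δhat₂ v)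
      ↔ ∀ v ∈ LinearMap.ker δhat₂, ρV g₂ v = ςhat (αhat.symm v)) :=
  ⟨cp.forall_symm_twisted_iff (γ := αhat.toLinearMap) hP₁ hδx₁ hx₁ hcodim₁,
    cp.forall_symm_twisted_iff (β := LinearMap.id) (γ := ςhat ∘ₗ αhat.symm.toLinearMap)
      hP₂ hδx₂ hx₂ hcodim₂⟩

open Paper in
/-- Well-definedness conditions in the first case (`δ̄₁ = δ̄₂ = 0`,
`δ̂ᵢ(xᵢ) = Pᵢ w_{gᵢ}` and codimension-one kernels). -/
theorem statement_12 {k : Type*} [Field k] {q : k} (hq0 : q ≠ 0)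
    {G : Type*} [Group G] {V : Type*} [AddCommGroup V] [Module k V] [FiniteDimensional k V]
    (ρV : Representation k G V) (f : G → G → kˣ) (hf : IsCocycle G f)
    {A : Type*} [Ring A] [Algebra k A] (cp : CrossedProduct A ρV f)
    (αhat : V ≃ₗ[k] V) (hαG : GLinear ρV (αhat : V →ₗ[k] V))
    (ςhat : V →ₗ[k] V)
    (δhat₁ δhat₂ : V →ₗ[k] A)
    (x₁ x₂ : V) (g₁ g₂ : G) (P₁ P₂ : A)
    (hP₁ : P₁ ∈ cp.SV) (hP₂ : P₂ ∈ cp.SV)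
    (hδx₁ : δhat₁ x₁ = P₁ * cp.w g₁) (hδx₂ : δhat₂ x₂ = P₂ * cp.w g₂)
    (hx₁ : x₁ ∉ LinearMap.ker δhat₁) (hx₂ : x₂ ∉ LinearMap.ker δhat₂)
    (hcodim₁ : ∀ v : V, ∃ c : k, v - c • x₁ ∈ LinearMap.ker δhat₁)
    (hcodim₂ : ∀ v : V, ∃ c : k, v - c • x₂ ∈ LinearMap.ker δhat₂)
    (hker : LinearMap.ker δhat₁ ≠ LinearMap.ker δhat₂)
    (hx₁₂ : x₁ ∈ LinearMap.ker δhat₂) (hx₂₁ : x₂ ∈ LinearMap.ker δhat₁) :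
    ((∀ v w : V,
        δhat₁ v * cp.ι (ςhat w) + cp.ι (αhat v) * δhat₁ w
          = δhat₁ w * cp.ι (ςhat v) + cp.ι (αhat w) * δhat₁ v)
      ↔ ∀ v ∈ LinearMap.ker δhat₁, ρV g₁ (ςhat v) = αhat v)
    ∧ ((∀ v w : V,
        δhat₂ v * cp.ι w + cp.ι (ςhat (αhat.symm v)) * δhat₂ w
          = δhat₂ w * cp.ι v + cp.ι (ςhat (αhat.symm w)) * δhat₂ v)
      ↔ ∀ v ∈ LinearMap.ker δhat₂, ρV g₂ v = ςhat (αhat.symm v)) :=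
  statement_12_general ρV f cp αhat ςhat δhat₁ δhat₂ x₁ x₂ g₁ g₂ P₁ P₂ hP₁ hP₂ hδx₁ hδx₂ hx₁ hx₂
    hcodim₁ hcodim₂
end
end
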